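/- The curvature tensor of the α-connection ∇^{(α)} on 𝒫⁺(M), computed on constant vector fields via R(τ₁,τ₂)τ = ∇_{τ₁}∇_{τ₂}τ − ∇_{τ₂}∇_{τ₁}τ, equals R^{(α)}_μ(τ₁,τ₂)τ = ((1−α²)/4)(G_μ(τ,τ₂)τ₁ − G_μ(τ,τ₁)τ₂); in particular ∇^{(α)} is flat if and only if α = ±1, and the Levi-Civita connection α = 0 has constant sectional curvature 1/4. -/

import Mathlib

open MeasureTheory Real

/-- The Fisher metric G_μ(τ,τ₁) = ∫ (dτ/dμ)(dτ₁/dμ) dμ at μ = f·λ, on densities. -/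
noncomputable def fisherG {M : Type*} [MeasurableSpace M] (lam : MeasureTheory.Measure M)
    (f a b : M → ℝ) : ℝ :=
  ∫ x, (a x / f x) * (b x / f x) * f x ∂lam

/-- The α-connection ∇^{(α)}_τ τ₁ = −((1+α)/2)((dτ/dμ)(dτ₁/dμ) − G_μ(τ,τ₁))μ, on densities. -/
noncomputable def alphaConn {M : Type*} [MeasurableSpace M] (lam : MeasureTheory.Measure M)
    (α : ℝ) (f h h₁ : M → ℝ) : M → ℝ :=
  fun x => -((1 + α) / 2) * ((h x / f x) * (h₁ x / f x) - fisherG lam f h h₁) * f x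

/-- Covariant derivative along the constant vector field h at μ = f·λ of a vector field V
(depending on the base density): directional derivative plus the connection term. -/
noncomputable def covDeriv {M : Type*} [MeasurableSpace M] (lam : MeasureTheory.Measure M)
    (α : ℝ) (f h : M → ℝ) (V : (M → ℝ) → (M → ℝ)) : M → ℝ :=
  fun x => deriv (fun t : ℝ => V (fun y => f y + t * h y) x) 0 + alphaConn lam α f h (V f) x

/-!
On constant vector fields the curvature is the antisymmetrisation in `p, q` of `∇_p ∇_q τ`.
Write `c = -(1 + α)/2`, so that `∇_q τ = c (qτ/f - G(q,τ) f)`. Differentiating this along `p`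
and adding `∇_p` applied to it (where `∫ p = 0` kills one term) gives, with `I = ∫ pqτ/f²`,
`∇_p ∇_q τ = (c - c²)(I f - pqτ/f²) - (c + c²) G(q,τ) p`.
The first part is symmetric in `p, q` and cancels, and `-(c + c²) = (1 - α²)/4`.
Differentiation under the integral sign is justified because a positive continuous density on a
compact space is bounded away from zero.
-/
open Filter Topology

section Algebra

variable {M : Type*} [MeasurableSpace M] (lam : Measure M)

lemma div_mul_div_mul_self (a b g : ℝ) : a / g * (b / g) * g = a * b / g := by
  rcases eq_or_ne g 0 with rfl | hg
  · simp
  · field_simp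

lemma fisherG_eq_integral_mul_div (g a b : M → ℝ) :
    fisherG lam g a b = ∫ y, a y * b y / g y ∂lam := by
  simp only [fisherG, div_mul_div_mul_self]

lemma fisherG_comm (g a b : M → ℝ) : fisherG lam g a b = fisherG lam g b a := by
  simp only [fisherG_eq_integral_mul_div, mul_comm (a _)]

lemma alphaConn_apply_eq (α : ℝ) (g q τ : M → ℝ) (x : M) :
    alphaConn lam α g q τ x = -((1 + α) / 2) * (q x * τ x / g x - fisherG lam g q τ * g x) := by
  simp only [alphaConn]
  rw [mul_assoc, sub_mul, div_mul_div_mul_self]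

end Algebra

section Perturbation

variable {M : Type*} [TopologicalSpace M] [CompactSpace M]

lemma exists_pos_eventually_forall_le_add_mul {f h : M → ℝ} (hf : Continuous f)
    (hfpos : ∀ x, 0 < f x) (hh : Continuous h) :
    ∃ ε > 0, ∀ᶠ t in 𝓝 (0 : ℝ), ∀ y, ε ≤ f y + t * h y := by
  obtain ⟨δ, hδ, hfδ⟩ := isCompact_univ.exists_forall_le' hf.continuousOn fun y _ => hfpos y
  obtain ⟨C, hC⟩ := isCompact_univ.exists_bound_of_continuousOn hh.continuousOn
  refine ⟨δ / 2, half_pos hδ, ?_⟩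
  have hsmall : ∀ᶠ t in 𝓝 (0 : ℝ), |t| * C < δ / 2 :=
    (continuous_abs.mul continuous_const).continuousAt.eventually_lt continuousAt_const
      (by simpa using half_pos hδ)
  filter_upwards [hsmall] with t ht y
  have hth : |t * h y| ≤ |t| * C := by
    rw [abs_mul]
    exact mul_le_mul_of_nonneg_left (hC y trivial) (abs_nonneg t)
  linarith [neg_abs_le (t * h y), hfδ y trivial]

variable [MeasurableSpace M] [OpensMeasurableSpace M] (lam : Measure M) [IsFiniteMeasure lam]

lemma Continuous.integrable_of_compactSpace {g : M → ℝ} (hg : Continuous g) : Integrable g lam :=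
  hg.integrable_of_hasCompactSupport (HasCompactSupport.of_compactSpace g)

lemma hasDerivAt_integral_div_add_mul {a f h : M → ℝ} (ha : Continuous a) (hf : Continuous f)
    (hfpos : ∀ x, 0 < f x) (hh : Continuous h) :
    HasDerivAt (fun t : ℝ => ∫ y, a y / (f y + t * h y) ∂lam)
      (-∫ y, a y * h y / f y ^ 2 ∂lam) 0 := by
  obtain ⟨ε, hε, hlow⟩ := exists_pos_eventually_forall_le_add_mul hf hfpos hh
  have hderiv := hasDerivAt_integral_of_dominated_loc_of_deriv_le (μ := lam) (x₀ := (0 : ℝ))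
    (F := fun t y => a y / (f y + t * h y))
    (F' := fun t y => -(a y * h y) / (f y + t * h y) ^ 2)
    (bound := fun y => |a y * h y| / ε ^ 2) hlow
    (Eventually.of_forall fun t =>
      (ha.measurable.div (hf.measurable.add (hh.measurable.const_mul t))).aestronglyMeasurable)
    (by
      simp only [zero_mul, add_zero]
      exact (ha.div hf fun y => (hfpos y).ne').integrable_of_compactSpace lam)
    ((ha.measurable.mul hh.measurable).neg.div
      ((hf.measurable.add (hh.measurable.const_mul 0)).pow_const 2)).aestronglyMeasurable
    (ae_of_all _ fun y t ht => by
      have hpos : 0 < f y + t * h y := hε.trans_le (ht y)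
      rw [Real.norm_eq_abs, abs_div, abs_neg, abs_of_pos (pow_pos hpos 2)]
      gcongr
      exact ht y)
    (((ha.mul hh).abs.div_const _).integrable_of_compactSpace lam)
    (ae_of_all _ fun y t ht => by
      have hg : HasDerivAt (fun t : ℝ => f y + t * h y) (h y) t := by
        simpa using ((hasDerivAt_id t).mul_const (h y)).const_add (f y)
      exact ((hasDerivAt_const t (a y)).div hg (hε.trans_le (ht y)).ne').congr_deriv (by ring))
  simpa [neg_div, integral_neg] using hderiv.2

variable {f : M → ℝ}

lemma hasDerivAt_fisherG_add_mul (hf : Continuous f) (hfpos : ∀ x, 0 < f x)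
    {a b p : M → ℝ} (ha : Continuous a) (hb : Continuous b) (hp : Continuous p) :
    HasDerivAt (fun t : ℝ => fisherG lam (fun y => f y + t * p y) a b)
      (-∫ y, a y * b y * p y / f y ^ 2 ∂lam) 0 := by
  simp only [fisherG_eq_integral_mul_div]
  exact hasDerivAt_integral_div_add_mul lam (ha.mul hb) hf hfpos hp

lemma hasDerivAt_alphaConn_add_mul (hf : Continuous f) (hfpos : ∀ x, 0 < f x)
    (α : ℝ) {τ p q : M → ℝ} (hτ : Continuous τ) (hp : Continuous p) (hq : Continuous q) (x : M) :
    HasDerivAt (fun t : ℝ => alphaConn lam α (fun y => f y + t * p y) q τ x)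
      (-((1 + α) / 2) * ((∫ y, q y * τ y * p y / f y ^ 2 ∂lam) * f x
        - q x * τ x * p x / f x ^ 2 - fisherG lam f q τ * p x)) 0 := by
  simp only [alphaConn_apply_eq]
  have hg : HasDerivAt (fun t : ℝ => f x + t * p x) (p x) 0 := by
    simpa using ((hasDerivAt_id (0 : ℝ)).mul_const (p x)).const_add (f x)
  have hdiv := (hasDerivAt_const (0 : ℝ) (q x * τ x)).div hg (by simpa using (hfpos x).ne')
  have hG := hasDerivAt_fisherG_add_mul lam hf hfpos hq hτ hp
  refine ((hdiv.sub (hG.mul hg)).const_mul (-((1 + α) / 2))).congr_deriv ?_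
  simp only [zero_mul, add_zero]
  ring

lemma fisherG_alphaConn (hf : Continuous f) (hfpos : ∀ x, 0 < f x)
    (α : ℝ) {τ p q : M → ℝ} (hτ : Continuous τ) (hp : Continuous p) (hq : Continuous q)
    (hpint : ∫ y, p y ∂lam = 0) :
    fisherG lam f p (alphaConn lam α f q τ)
      = -((1 + α) / 2) * ∫ y, q y * τ y * p y / f y ^ 2 ∂lam := by
  set c := -((1 + α) / 2)
  have hpointwise : ∀ y, p y * alphaConn lam α f q τ y / f y
      = c * (q y * τ y * p y / f y ^ 2) - c * fisherG lam f q τ * p y := by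
    intro y
    have := (hfpos y).ne'
    rw [alphaConn_apply_eq]
    field_simp
    ring
  have hint : Integrable (fun y => q y * τ y * p y / f y ^ 2) lam :=
    Continuous.integrable_of_compactSpace lam
      (((hq.mul hτ).mul hp).div (hf.pow 2) fun y => pow_ne_zero 2 (hfpos y).ne')
  rw [fisherG_eq_integral_mul_div, integral_congr_ae (ae_of_all _ hpointwise),
    integral_sub (hint.const_mul c) ((hp.integrable_of_compactSpace lam).const_mul _),
    integral_const_mul, integral_const_mul, hpint, mul_zero, sub_zero]

lemma covDeriv_alphaConn (hf : Continuous f) (hfpos : ∀ x, 0 < f x)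
    (α : ℝ) {τ p q : M → ℝ} (hτ : Continuous τ) (hp : Continuous p) (hq : Continuous q)
    (hpint : ∫ y, p y ∂lam = 0) (x : M) :
    covDeriv lam α f p (fun g => alphaConn lam α g q τ) x
      = -((1 + α) * (3 + α) / 4)
          * ((∫ y, q y * τ y * p y / f y ^ 2 ∂lam) * f x - q x * τ x * p x / f x ^ 2)
        + (1 - α ^ 2) / 4 * fisherG lam f q τ * p x := by
  have := (hfpos x).ne'
  rw [covDeriv, (hasDerivAt_alphaConn_add_mul lam hf hfpos α hτ hp hq x).deriv,
    alphaConn_apply_eq, fisherG_alphaConn lam hf hfpos α hτ hp hq hpint, alphaConn_apply_eq]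
  field_simp
  ring

end Perturbation

lemma one_sub_sq_div_four_eq_zero_iff (α : ℝ) : (1 - α ^ 2) / 4 = 0 ↔ α = 1 ∨ α = -1 := by
  rw [div_eq_zero_iff, sub_eq_zero, eq_comm, sq_eq_one_iff]
  norm_num

theorem stmt14_general {M : Type*} [TopologicalSpace M] [CompactSpace M]
    [MeasurableSpace M] [BorelSpace M] (lam : Measure M) [IsProbabilityMeasure lam]
    (f : M → ℝ) (hf : Continuous f) (hfpos : ∀ x, 0 < f x)
    (τ h₁ h₂ : M → ℝ) (hτ : Continuous τ) (hh₁ : Continuous h₁) (hh₂ : Continuous h₂)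
    (hh₁int : ∫ x, h₁ x ∂lam = 0) (hh₂int : ∫ x, h₂ x ∂lam = 0)
    (α : ℝ) :
    (∀ x, covDeriv lam α f h₁ (fun g => alphaConn lam α g h₂ τ) x
          - covDeriv lam α f h₂ (fun g => alphaConn lam α g h₁ τ) x
        = ((1 - α ^ 2) / 4) * (fisherG lam f τ h₂ * h₁ x - fisherG lam f τ h₁ * h₂ x)) ∧
    (((1 - α ^ 2) / 4 = 0) ↔ (α = 1 ∨ α = -1)) ∧
    ((1 - (0 : ℝ) ^ 2) / 4 = 1 / 4) := by
  refine ⟨fun x => ?_, one_sub_sq_div_four_eq_zero_iff α, by norm_num⟩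
  have hsymm : ∫ y, h₁ y * τ y * h₂ y / f y ^ 2 ∂lam = ∫ y, h₂ y * τ y * h₁ y / f y ^ 2 ∂lam :=
    integral_congr_ae (ae_of_all _ fun y => by ring)
  rw [covDeriv_alphaConn lam hf hfpos α hτ hh₁ hh₂ hh₁int,
    covDeriv_alphaConn lam hf hfpos α hτ hh₂ hh₁ hh₂int, hsymm,
    fisherG_comm lam f τ h₂, fisherG_comm lam f τ h₁]
  ring

/-- The curvature of ∇^{(α)} on constant vector fields is
R^{(α)}(τ₁,τ₂)τ = ((1−α²)/4)(G(τ,τ₂)τ₁ − G(τ,τ₁)τ₂); in particular ∇^{(α)} is flat iff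
α = ±1, and for α = 0 (the Levi-Civita connection) the factor is 1/4. -/
theorem stmt14 {M : Type*} [TopologicalSpace M] [CompactSpace M] [ConnectedSpace M]
    [MeasurableSpace M] [BorelSpace M] (lam : Measure M) [IsProbabilityMeasure lam]
    (f : M → ℝ) (hf : Continuous f) (hfpos : ∀ x, 0 < f x) (hfint : ∫ x, f x ∂lam = 1)
    (τ h₁ h₂ : M → ℝ) (hτ : Continuous τ) (hh₁ : Continuous h₁) (hh₂ : Continuous h₂)
    (hτint : ∫ x, τ x ∂lam = 0) (hh₁int : ∫ x, h₁ x ∂lam = 0) (hh₂int : ∫ x, h₂ x ∂lam = 0)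
    (α : ℝ) :
    (∀ x, covDeriv lam α f h₁ (fun g => alphaConn lam α g h₂ τ) x
          - covDeriv lam α f h₂ (fun g => alphaConn lam α g h₁ τ) x
        = ((1 - α ^ 2) / 4) * (fisherG lam f τ h₂ * h₁ x - fisherG lam f τ h₁ * h₂ x)) ∧
    (((1 - α ^ 2) / 4 = 0) ↔ (α = 1 ∨ α = -1)) ∧
    ((1 - (0 : ℝ) ^ 2) / 4 = 1 / 4) :=
  stmt14_general lam f hf hfpos τ h₁ h₂ hτ hh₁ hh₂ hh₁int hh₂int α
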